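/- With O(M_n) as above and I the Poisson ideal generated by x_{1j} and x_{i1} (2 ≤ i,j ≤ n), the quotient Poisson algebra O(M_n)/I is isomorphic as a Poisson algebra to O(M_{n−1})[t], where the bracket on O(M_{n−1})[t] extends that of O(M_{n−1}) trivially (t is Poisson-central); the isomorphism sends x_{ij}+I ↦ x_{i−1,j−1} for 2 ≤ i,j ≤ n and x_{11}+I ↦ t. -/

import Mathlib

/- The semiclassical limit Poisson bracket on O(M_n) = ℂ[x_{ij}], realized on
`MvPolynomial (Fin n × Fin n) ℂ`.  The Leibniz-rule extension of a bracket
given on generators by the antisymmetric bivector `Pn n p q = {x_p, x_q}` is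
the bidifferential operator `pbn n f g = ∑ p q, Pn n p q * ∂f/∂x_p * ∂g/∂x_q`. -/

open MvPolynomial

noncomputable section

/-- The bivector of the semiclassical limit bracket:
`{x_{ij}, x_{kl}} = 2 x_{il} x_{kj}` if `i<k` and `j<l`;
`= x_{ij} x_{kl}` if (`i=k` and `j<l`) or (`j=l` and `i<k`); `= 0` otherwise;
extended antisymmetrically. -/
def Pn (n : ℕ) (p q : Fin n × Fin n) : MvPolynomial (Fin n × Fin n) ℂ :=
  if p.1 < q.1 ∧ p.2 < q.2 then 2 * X (p.1, q.2) * X (q.1, p.2)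
  else if q.1 < p.1 ∧ q.2 < p.2 then -(2 * X (q.1, p.2) * X (p.1, q.2))
  else if (p.1 = q.1 ∧ p.2 < q.2) ∨ (p.2 = q.2 ∧ p.1 < q.1) then X p * X q
  else if (p.1 = q.1 ∧ q.2 < p.2) ∨ (p.2 = q.2 ∧ q.1 < p.1) then -(X p * X q)
  else 0

/-- The semiclassical limit Poisson bracket on `O(M_n)` (the Leibniz-rule
extension of the bracket on generators). -/
def pbn (n : ℕ) (f g : MvPolynomial (Fin n × Fin n) ℂ) :
    MvPolynomial (Fin n × Fin n) ℂ :=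
  ∑ p : Fin n × Fin n, ∑ q : Fin n × Fin n, Pn n p q * pderiv p f * pderiv q g

/-- The Poisson ideal `I = (x_{1j}, x_{i1} : 2 ≤ i,j)` of `O(M_{n+1})`
(first row/column indexed by `0`). -/
def In (n : ℕ) : Ideal (MvPolynomial (Fin (n + 1) × Fin (n + 1)) ℂ) :=
  Ideal.span {q : MvPolynomial (Fin (n + 1) × Fin (n + 1)) ℂ |
    ∃ j : Fin (n + 1), j ≠ 0 ∧ (q = X (0, j) ∨ q = X (j, 0))}

/-- The Poisson bracket of `O(M_n)[t]` extending that of `O(M_n)` trivially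
(`t` is Poisson-central): applied coefficientwise. -/
def pbP (n : ℕ) (F G : Polynomial (MvPolynomial (Fin n × Fin n) ℂ)) :
    Polynomial (MvPolynomial (Fin n × Fin n) ℂ) :=
  ∑ i ∈ F.support, ∑ j ∈ G.support,
    Polynomial.C (pbn n (F.coeff i) (G.coeff j)) * Polynomial.X ^ (i + j)

/-
Both brackets are biderivations, and an algebra map out of a polynomial ring intertwines two
biderivations as soon as it does so on pairs of generators. The map `x₁₁ ↦ t`, `x₁ⱼ, xᵢ₁ ↦ 0`,
`xᵢⱼ ↦ xᵢ₋₁,ⱼ₋₁` kills `I` and is inverted by the obvious map back. On generators, the bracket of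
two variables outside the first row and column is the bracket of `O(M_n)`, since the defining formula
only compares indices; every other bracket of generators involves a variable of the first row or
column in each term, so it is sent to `0`, as is every bracket with the central `t`.
-/

structure IsBiderivation (R : Type*) {A : Type*} [CommSemiring R] [CommSemiring A] [Algebra R A]
    (B : A → A → A) : Prop where
  add_left (x x' y : A) : B (x + x') y = B x y + B x' y
  add_right (x y y' : A) : B x (y + y') = B x y + B x y'
  mul_left (x x' y : A) : B (x * x') y = x * B x' y + x' * B x y
  mul_right (x y y' : A) : B x (y * y') = y * B x y' + y' * B x y
  algebraMap_left (a : R) (y : A) : B (algebraMap R A a) y = 0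
  algebraMap_right (a : R) (x : A) : B x (algebraMap R A a) = 0

namespace IsBiderivation

variable {R A : Type*} [CommSemiring R] [CommSemiring A] [Algebra R A] {B : A → A → A}

theorem zero_left (hB : IsBiderivation R B) (y : A) : B 0 y = 0 := by
  simpa using hB.algebraMap_left 0 y

theorem zero_right (hB : IsBiderivation R B) (x : A) : B x 0 = 0 := by
  simpa using hB.algebraMap_right 0 x

theorem one_left (hB : IsBiderivation R B) (y : A) : B 1 y = 0 := by
  simpa using hB.algebraMap_left 1 y

theorem one_right (hB : IsBiderivation R B) (x : A) : B x 1 = 0 := by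
  simpa using hB.algebraMap_right 1 x

end IsBiderivation

namespace MvPolynomial

variable {R σ : Type*} [CommSemiring R]

def bivectorBracket [Fintype σ] (P : σ → σ → MvPolynomial σ R) (f g : MvPolynomial σ R) :
    MvPolynomial σ R :=
  ∑ p, ∑ q, P p q * pderiv p f * pderiv q g

theorem isBiderivation_bivectorBracket [Fintype σ] (P : σ → σ → MvPolynomial σ R) :
    IsBiderivation R (bivectorBracket P) where
  add_left _ _ _ := by simp [bivectorBracket, mul_add, add_mul, Finset.sum_add_distrib]
  add_right _ _ _ := by simp [bivectorBracket, mul_add, Finset.sum_add_distrib]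
  mul_left _ _ _ := by
    simp only [bivectorBracket, Finset.mul_sum, ← Finset.sum_add_distrib, pderiv_mul]
    exact Finset.sum_congr rfl fun _ _ => Finset.sum_congr rfl fun _ _ => by ring
  mul_right _ _ _ := by
    simp only [bivectorBracket, Finset.mul_sum, ← Finset.sum_add_distrib, pderiv_mul]
    exact Finset.sum_congr rfl fun _ _ => Finset.sum_congr rfl fun _ _ => by ring
  algebraMap_left _ _ := by simp [bivectorBracket, algebraMap_eq]
  algebraMap_right _ _ := by simp [bivectorBracket, algebraMap_eq]

theorem bivectorBracket_X_X [Fintype σ] [DecidableEq σ] (P : σ → σ → MvPolynomial σ R)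
    (p q : σ) : bivectorBracket P (X p) (X q) = P p q := by
  simp [bivectorBracket, pderiv_X, Pi.single_apply]

theorem map_biderivation_of_forall_X {A : Type*} [CommSemiring A] [Algebra R A]
    (φ : MvPolynomial σ R →ₐ[R] A) {B : MvPolynomial σ R → MvPolynomial σ R → MvPolynomial σ R}
    {B' : A → A → A} (hB : IsBiderivation R B) (hB' : IsBiderivation R B')
    (h : ∀ i j, φ (B (X i) (X j)) = B' (φ (X i)) (φ (X j))) (f g : MvPolynomial σ R) :
    φ (B f g) = B' (φ f) (φ g) := by
  have h_X_left (i : σ) (g : MvPolynomial σ R) : φ (B (X i) g) = B' (φ (X i)) (φ g) := by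
    induction g using MvPolynomial.induction_on with
    | C a =>
      rw [← algebraMap_eq, hB.algebraMap_right, AlgHom.commutes, hB'.algebraMap_right, map_zero]
    | add g g' hg hg' => rw [hB.add_right, map_add, hg, hg', map_add, hB'.add_right]
    | mul_X g j hg =>
      rw [hB.mul_right, map_add, map_mul, map_mul, h, hg, map_mul, hB'.mul_right]
  induction f using MvPolynomial.induction_on with
  | C a => rw [← algebraMap_eq, hB.algebraMap_left, AlgHom.commutes, hB'.algebraMap_left, map_zero]
  | add f f' hf hf' => rw [hB.add_left, map_add, hf, hf', map_add, hB'.add_left]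
  | mul_X f i hf => rw [hB.mul_left, map_add, map_mul, map_mul, h_X_left, hf, map_mul, hB'.mul_left]

end MvPolynomial

namespace Polynomial

variable {R A : Type*} [CommSemiring R] [CommSemiring A] [Algebra R A] {B : A → A → A}

def coeffBracket (B : A → A → A) (F G : A[X]) : A[X] :=
  ∑ i ∈ F.support, ∑ j ∈ G.support, C (B (F.coeff i) (G.coeff j)) * X ^ (i + j)

theorem coeffBracket_eq_sum (F G : A[X]) :
    coeffBracket B F G = F.sum fun i a => G.sum fun j b => C (B a b) * X ^ (i + j) := rfl

theorem coeffBracket_monomial_monomial (hB : IsBiderivation R B) (i j : ℕ) (a b : A) :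
    coeffBracket B (monomial i a) (monomial j b) = monomial (i + j) (B a b) := by
  rw [coeffBracket_eq_sum, sum_monomial_index, sum_monomial_index, C_mul_X_pow_eq_monomial]
  · simp [hB.zero_right]
  · simp [Polynomial.sum, hB.zero_left]

theorem coeffBracket_add_left (hB : IsBiderivation R B) (F F' G : A[X]) :
    coeffBracket B (F + F') G = coeffBracket B F G + coeffBracket B F' G := by
  rw [coeffBracket_eq_sum, coeffBracket_eq_sum, coeffBracket_eq_sum, sum_add_index]
  · simp [Polynomial.sum, hB.zero_left]
  · intro i a b
    rw [← Polynomial.sum_add]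
    congr 1; ext j c; rw [hB.add_left, map_add, add_mul]

theorem coeffBracket_add_right (hB : IsBiderivation R B) (F G G' : A[X]) :
    coeffBracket B F (G + G') = coeffBracket B F G + coeffBracket B F G' := by
  rw [coeffBracket_eq_sum, coeffBracket_eq_sum, coeffBracket_eq_sum, ← Polynomial.sum_add]
  congr 1; ext i a
  rw [sum_add_index]
  · simp [hB.zero_right]
  · intro j b c; rw [hB.add_right, map_add, add_mul]

theorem coeffBracket_C_C (hB : IsBiderivation R B) (a b : A) :
    coeffBracket B (C a) (C b) = C (B a b) := by
  simp only [← monomial_zero_left, coeffBracket_monomial_monomial hB]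

theorem coeffBracket_X_left (hB : IsBiderivation R B) (G : A[X]) : coeffBracket B X G = 0 := by
  induction G using Polynomial.induction_on' with
  | add p q hp hq => rw [coeffBracket_add_right hB, hp, hq, add_zero]
  | monomial j b =>
    rw [← monomial_one_one_eq_X, coeffBracket_monomial_monomial hB, hB.one_left,
      monomial_zero_right]

theorem coeffBracket_X_right (hB : IsBiderivation R B) (F : A[X]) : coeffBracket B F X = 0 := by
  induction F using Polynomial.induction_on' with
  | add p q hp hq => rw [coeffBracket_add_left hB, hp, hq, add_zero]
  | monomial j b =>
    rw [← monomial_one_one_eq_X, coeffBracket_monomial_monomial hB, hB.one_right,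
      monomial_zero_right]

theorem coeffBracket_mul_left (hB : IsBiderivation R B) (F F' G : A[X]) :
    coeffBracket B (F * F') G = F * coeffBracket B F' G + F' * coeffBracket B F G := by
  induction F using Polynomial.induction_on' with
  | add p q hp hq =>
    rw [add_mul, coeffBracket_add_left hB, hp, hq, coeffBracket_add_left hB]; ring
  | monomial i a =>
    induction F' using Polynomial.induction_on' with
    | add p q hp hq =>
      rw [mul_add, coeffBracket_add_left hB, hp, hq, coeffBracket_add_left hB]; ring
    | monomial j b =>
      induction G using Polynomial.induction_on' with
      | add p q hp hq => simp only [coeffBracket_add_right hB, hp, hq]; ring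
      | monomial k c =>
        simp only [monomial_mul_monomial, coeffBracket_monomial_monomial hB, hB.mul_left,
          map_add]
        congr 3 <;> ring

theorem coeffBracket_mul_right (hB : IsBiderivation R B) (F G G' : A[X]) :
    coeffBracket B F (G * G') = G * coeffBracket B F G' + G' * coeffBracket B F G := by
  induction G using Polynomial.induction_on' with
  | add p q hp hq =>
    rw [add_mul, coeffBracket_add_right hB, hp, hq, coeffBracket_add_right hB]; ring
  | monomial i a =>
    induction G' using Polynomial.induction_on' with
    | add p q hp hq =>
      rw [mul_add, coeffBracket_add_right hB, hp, hq, coeffBracket_add_right hB]; ring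
    | monomial j b =>
      induction F using Polynomial.induction_on' with
      | add p q hp hq => simp only [coeffBracket_add_left hB, hp, hq]; ring
      | monomial k c =>
        simp only [monomial_mul_monomial, coeffBracket_monomial_monomial hB, hB.mul_right,
          map_add]
        congr 3 <;> ring

theorem _root_.IsBiderivation.coeffBracket (hB : IsBiderivation R B) :
    IsBiderivation R (coeffBracket B) where
  add_left := coeffBracket_add_left hB
  add_right := coeffBracket_add_right hB
  mul_left := coeffBracket_mul_left hB
  mul_right := coeffBracket_mul_right hB
  algebraMap_left a G := by
    induction G using Polynomial.induction_on' with
    | add p q hp hq => rw [coeffBracket_add_right hB, hp, hq, add_zero]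
    | monomial j b =>
      rw [algebraMap_apply, ← monomial_zero_left, coeffBracket_monomial_monomial hB,
        hB.algebraMap_left, monomial_zero_right]
  algebraMap_right a F := by
    induction F using Polynomial.induction_on' with
    | add p q hp hq => rw [coeffBracket_add_left hB, hp, hq, add_zero]
    | monomial j b =>
      rw [algebraMap_apply, ← monomial_zero_left, coeffBracket_monomial_monomial hB,
        hB.algebraMap_right, monomial_zero_right]

end Polynomial

theorem isBiderivation_pbn (n : ℕ) : IsBiderivation ℂ (pbn n) :=
  isBiderivation_bivectorBracket (Pn n)

theorem pbP_eq_coeffBracket (n : ℕ) : pbP n = Polynomial.coeffBracket (pbn n) := rfl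

theorem isBiderivation_pbP (n : ℕ) : IsBiderivation ℂ (pbP n) :=
  (isBiderivation_pbn n).coeffBracket

theorem pbn_X_X (n : ℕ) (p q : Fin n × Fin n) : pbn n (X p) (X q) = Pn n p q :=
  bivectorBracket_X_X (Pn n) p q

def cornerMap (n : ℕ) : MvPolynomial (Fin (n + 1) × Fin (n + 1)) ℂ →ₐ[ℂ]
    Polynomial (MvPolynomial (Fin n × Fin n) ℂ) :=
  aeval fun p => Fin.cases (Fin.cases Polynomial.X (fun _ => 0) p.2)
    (fun i => Fin.cases 0 (fun j => Polynomial.C (X (i, j))) p.2) p.1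

section cornerMap

variable (n : ℕ)

@[simp] theorem cornerMap_X_zero_zero : cornerMap n (X (0, 0)) = Polynomial.X := aeval_X _ _

@[simp] theorem cornerMap_X_zero_succ (j : Fin n) : cornerMap n (X (0, j.succ)) = 0 := aeval_X _ _

@[simp] theorem cornerMap_X_succ_zero (i : Fin n) : cornerMap n (X (i.succ, 0)) = 0 := aeval_X _ _

@[simp] theorem cornerMap_X_succ_succ (i j : Fin n) :
    cornerMap n (X (i.succ, j.succ)) = Polynomial.C (X (i, j)) := aeval_X _ _

theorem cornerMap_eq_zero_of_mem_In : ∀ a ∈ In n, cornerMap n a = 0 := by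
  suffices In n ≤ RingHom.ker (cornerMap n) from fun a ha => this ha
  rw [In, Ideal.span_le]
  rintro q ⟨j, hj, rfl | rfl⟩ <;> obtain ⟨k, rfl⟩ := Fin.exists_succ_eq.mpr hj <;> simp

theorem cornerMap_pbn_X_X (p q : Fin (n + 1) × Fin (n + 1)) :
    cornerMap n (pbn (n + 1) (X p) (X q)) = pbP n (cornerMap n (X p)) (cornerMap n (X q)) := by
  have hB := isBiderivation_pbn n
  obtain ⟨i, j⟩ := p
  obtain ⟨k, l⟩ := q
  rcases Fin.eq_zero_or_eq_succ i with rfl | ⟨i, rfl⟩ <;>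
    rcases Fin.eq_zero_or_eq_succ j with rfl | ⟨j, rfl⟩ <;>
    rcases Fin.eq_zero_or_eq_succ k with rfl | ⟨k, rfl⟩ <;>
    rcases Fin.eq_zero_or_eq_succ l with rfl | ⟨l, rfl⟩ <;>
    simp only [cornerMap_X_zero_zero, cornerMap_X_zero_succ, cornerMap_X_succ_zero,
      cornerMap_X_succ_succ, pbP_eq_coeffBracket, Polynomial.coeffBracket_X_left hB,
      Polynomial.coeffBracket_X_right hB, Polynomial.coeffBracket_C_C hB,
      hB.coeffBracket.zero_left, hB.coeffBracket.zero_right, pbn_X_X] <;>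
    simp only [Pn, Fin.succ_lt_succ_iff, Fin.succ_inj] <;>
    split_ifs <;>
    simp_all [eq_comm (a := (0 : Fin (n + 1))), map_ofNat]

end cornerMap

def quotientCornerMap (n : ℕ) : (MvPolynomial (Fin (n + 1) × Fin (n + 1)) ℂ ⧸ In n) →ₐ[ℂ]
    Polynomial (MvPolynomial (Fin n × Fin n) ℂ) :=
  Ideal.Quotient.liftₐ (In n) (cornerMap n) (cornerMap_eq_zero_of_mem_In n)

@[simp] theorem quotientCornerMap_mk (n : ℕ) (f : MvPolynomial (Fin (n + 1) × Fin (n + 1)) ℂ) :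
    quotientCornerMap n (Ideal.Quotient.mk (In n) f) = cornerMap n f := rfl

@[simp] theorem mk_X_zero_succ (n : ℕ) (j : Fin n) :
    Ideal.Quotient.mk (In n) (X (0, j.succ)) = 0 :=
  Ideal.Quotient.eq_zero_iff_mem.mpr (Ideal.subset_span ⟨j.succ, Fin.succ_ne_zero j, Or.inl rfl⟩)

@[simp] theorem mk_X_succ_zero (n : ℕ) (i : Fin n) :
    Ideal.Quotient.mk (In n) (X (i.succ, 0)) = 0 :=
  Ideal.Quotient.eq_zero_iff_mem.mpr (Ideal.subset_span ⟨i.succ, Fin.succ_ne_zero i, Or.inr rfl⟩)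

def cornerInv (n : ℕ) : Polynomial (MvPolynomial (Fin n × Fin n) ℂ) →ₐ[ℂ]
    (MvPolynomial (Fin (n + 1) × Fin (n + 1)) ℂ ⧸ In n) :=
  Polynomial.aevalTower
    (aeval fun q : Fin n × Fin n => Ideal.Quotient.mk (In n) (X (q.1.succ, q.2.succ)))
    (Ideal.Quotient.mk (In n) (X (0, 0)))

theorem quotientCornerMap_comp_cornerInv (n : ℕ) :
    (quotientCornerMap n).comp (cornerInv n) = AlgHom.id ℂ _ := by
  apply Polynomial.algHom_ext'
  · apply MvPolynomial.algHom_ext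
    intro q
    simp [cornerInv]
  · simp [cornerInv, Polynomial.aevalTower_X]

theorem cornerInv_comp_quotientCornerMap (n : ℕ) :
    (cornerInv n).comp (quotientCornerMap n) = AlgHom.id ℂ _ := by
  apply Ideal.Quotient.algHom_ext
  apply MvPolynomial.algHom_ext
  rintro ⟨i, j⟩
  rcases Fin.eq_zero_or_eq_succ i with rfl | ⟨i, rfl⟩ <;>
    rcases Fin.eq_zero_or_eq_succ j with rfl | ⟨j, rfl⟩ <;>
    simp [cornerInv, Polynomial.aevalTower_X]

def quotientEquiv (n : ℕ) : (MvPolynomial (Fin (n + 1) × Fin (n + 1)) ℂ ⧸ In n) ≃ₐ[ℂ]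
    Polynomial (MvPolynomial (Fin n × Fin n) ℂ) :=
  AlgEquiv.ofAlgHom (quotientCornerMap n) (cornerInv n) (quotientCornerMap_comp_cornerInv n)
    (cornerInv_comp_quotientCornerMap n)

/-- `O(M_{n+1})/I ≅ O(M_n)[t]` as Poisson algebras, the
isomorphism sending `x_{11}+I ↦ t` and `x_{ij}+I ↦ x_{i−1,j−1}` for
`2 ≤ i,j`; it intertwines the bracket induced on the quotient with the
trivial central extension of the bracket of `O(M_n)`. -/
theorem stmt12 (n : ℕ) :
    ∃ e : (MvPolynomial (Fin (n + 1) × Fin (n + 1)) ℂ ⧸ In n) ≃ₐ[ℂ]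
        Polynomial (MvPolynomial (Fin n × Fin n) ℂ),
      e (Ideal.Quotient.mk (In n) (X (0, 0))) = Polynomial.X ∧
      (∀ i j : Fin n,
        e (Ideal.Quotient.mk (In n) (X (i.succ, j.succ))) = Polynomial.C (X (i, j))) ∧
      (∀ f g : MvPolynomial (Fin (n + 1) × Fin (n + 1)) ℂ,
        e (Ideal.Quotient.mk (In n) (pbn (n + 1) f g)) =
          pbP n (e (Ideal.Quotient.mk (In n) f)) (e (Ideal.Quotient.mk (In n) g))) := by
  refine ⟨quotientEquiv n, cornerMap_X_zero_zero n, cornerMap_X_succ_succ n, fun f g => ?_⟩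
  exact map_biderivation_of_forall_X (cornerMap n) (isBiderivation_pbn (n + 1))
    (isBiderivation_pbP n) (cornerMap_pbn_X_X n) f g

end
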